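/- Assume γ₊ > γ₋ (so Δ > 0). Then the space of generators is the graph of a parabolic segment: Q = {(a, Σ + δ·(1 − a²/Δ²)) : a ∈ [−Δ, Δ]}. Moreover, for every x ∈ ℝ the unitary U = exp(iπx σ_x) yields the point with a = Δ·cos(2πx), i.e. J_12(U) − J_21(U) = Δ·cos(2πx) and J_12(U) + J_21(U) = Σ + δ·sin²(2πx). -/

import Mathlib

/-!
Every `U ∈ SU(2)` is a Cayley–Klein matrix `!![α, -β̄; β, ᾱ]` with `|α|² + |β|² = 1`. For the
operators `σ₊, σ₋, σ_z` the sums `J₁₂, J₂₁` depend only on `t = |α|²` and `s = |β|²`: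
`J₁₂ = γ₊ t² + γ₋ s² + 4 γ_z t s`, and `J₂₁` is the same with `γ₊, γ₋` exchanged. Since `t + s = 1`,
with `c = t - s ∈ [-1, 1]` and `4 t s = 1 - c²` the generator is `(Δ c, Σ + δ (1 - c²))`.
The rotation `exp(iθσ_x)` is the Cayley–Klein matrix with `α = cos θ`, `β = i sin θ`, so it has
`c = cos 2θ`; hence every `c ∈ [-1, 1]` occurs, and `a = Δ c` gives the parabola.
-/

open Matrix Complex

/-- `Jf V U i j = ∑ₖ |(U* Vₖ U)ᵢⱼ|²`. -/
noncomputable def Jf {r : ℕ} (V : Fin r → Matrix (Fin 2) (Fin 2) ℂ)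
    (U : Matrix (Fin 2) (Fin 2) ℂ) (i j : Fin 2) : ℝ :=
  ∑ k, ‖(Uᴴ * V k * U) i j‖ ^ 2

/-- The space of generators `Q`. -/
noncomputable def Qset {r : ℕ} (V : Fin r → Matrix (Fin 2) (Fin 2) ℂ) : Set (ℝ × ℝ) :=
  {p | ∃ U ∈ Matrix.specialUnitaryGroup (Fin 2) ℂ,
    p = (Jf V U 0 1 - Jf V U 1 0, Jf V U 0 1 + Jf V U 1 0)}

/-- `lam` is stabilizable if some unitary makes the induced derivative vanish. -/
def Stabilizable {r : ℕ} (V : Fin r → Matrix (Fin 2) (Fin 2) ℂ) (lam : ℝ) : Prop :=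
  ∃ U ∈ Matrix.specialUnitaryGroup (Fin 2) ℂ,
    Jf V U 0 1 - lam * (Jf V U 0 1 + Jf V U 1 0) = 0

def cayleyKlein {R : Type*} [Star R] [Neg R] (α β : R) : Matrix (Fin 2) (Fin 2) R :=
  !![α, -star β; β, star α]

theorem Matrix.mem_specialUnitaryGroup_fin_two_iff {R : Type*} [CommRing R] [StarRing R]
    {U : Matrix (Fin 2) (Fin 2) R} :
    U ∈ specialUnitaryGroup (Fin 2) R ↔
      ∃ α β : R, star α * α + star β * β = 1 ∧ U = cayleyKlein α β := by
  rw [mem_specialUnitaryGroup_iff, mem_unitaryGroup_iff', star_eq_conjTranspose]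
  constructor
  · rintro ⟨hunit, hdet⟩
    have hadj : Uᴴ = adjugate U := by
      rw [← inv_eq_left_inv hunit, inv_def, hdet, Ring.inverse_one, one_smul]
    rw [adjugate_fin_two, ← ext_iff] at hadj
    have h00 := hadj 0 0
    have h10 := hadj 0 1
    simp only [conjTranspose_apply, of_apply, cons_val', cons_val_zero, cons_val_one] at h00 h10
    refine ⟨U 0 0, U 1 0, ?_, ?_⟩
    · simpa [mul_apply, Fin.sum_univ_two] using congrFun₂ hunit 0 0
    · rw [eta_fin_two U]
      simp [cayleyKlein, h00, h10]
  · rintro ⟨α, β, hαβ, rfl⟩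
    constructor
    · ext i j
      fin_cases i <;> fin_cases j <;> simp [cayleyKlein, mul_apply, Fin.sum_univ_two, hαβ] <;>
        first | linear_combination hαβ | ring
    · simp only [cayleyKlein, det_fin_two_of]
      linear_combination hαβ

theorem Matrix.mem_specialUnitaryGroup_fin_two_iff_norm {U : Matrix (Fin 2) (Fin 2) ℂ} :
    U ∈ specialUnitaryGroup (Fin 2) ℂ ↔
      ∃ α β : ℂ, ‖α‖ ^ 2 + ‖β‖ ^ 2 = 1 ∧ U = cayleyKlein α β := by
  simp only [mem_specialUnitaryGroup_fin_two_iff, RCLike.star_def, conj_mul', ← ofReal_pow,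
    ← ofReal_add, ofReal_eq_one]

theorem Matrix.exp_smul_pauliX (z : ℂ) :
    NormedSpace.exp (z • !![0, 1; 1, 0] : Matrix (Fin 2) (Fin 2) ℂ) =
      !![cosh z, sinh z; sinh z, cosh z] := by
  have hP : (!![1, 1; 1, -1] : Matrix (Fin 2) (Fin 2) ℂ) * ((2⁻¹ : ℂ) • !![1, 1; 1, -1]) = 1 := by
    rw [one_fin_two]
    norm_num [smul_of]
  let P : (Matrix (Fin 2) (Fin 2) ℂ)ˣ := ⟨_, _, hP, mul_eq_one_comm.1 hP⟩
  have hdiag : z • (!![0, 1; 1, 0] : Matrix (Fin 2) (Fin 2) ℂ) =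
      P * diagonal ![z, -z] * P⁻¹ := by
    norm_num [P, diagonal_fin_two, smul_of, ← mul_add]
  rw [hdiag, exp_units_conj, exp_diagonal]
  simp [P, diagonal_fin_two, smul_of, Pi.exp_def, ← Complex.exp_eq_exp_ℂ, Complex.cosh,
    Complex.sinh, div_eq_mul_inv, sub_eq_add_neg, add_mul]

theorem Matrix.exp_I_mul_smul_pauliX (θ : ℝ) :
    NormedSpace.exp ((I * θ) • !![0, 1; 1, 0] : Matrix (Fin 2) (Fin 2) ℂ) =
      cayleyKlein (Real.cos θ : ℂ) (I * Real.sin θ) := by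
  rw [exp_smul_pauliX, mul_comm, cosh_mul_I, sinh_mul_I, cayleyKlein]
  simp [mul_comm, ← ofReal_cos, ← ofReal_sin, conj_ofReal]

theorem norm_cos_sq_add_norm_I_mul_sin_sq (θ : ℝ) :
    ‖(Real.cos θ : ℂ)‖ ^ 2 + ‖I * Real.sin θ‖ ^ 2 = 1 := by
  simp only [norm_mul, norm_I, one_mul, norm_real, Real.norm_eq_abs, sq_abs,
    Real.cos_sq_add_sin_sq]

theorem Matrix.exp_I_mul_smul_pauliX_mem_specialUnitaryGroup (θ : ℝ) :
    NormedSpace.exp ((I * θ) • !![0, 1; 1, 0] : Matrix (Fin 2) (Fin 2) ℂ) ∈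
      specialUnitaryGroup (Fin 2) ℂ := by
  rw [exp_I_mul_smul_pauliX]
  exact mem_specialUnitaryGroup_fin_two_iff_norm.2 ⟨_, _, norm_cos_sq_add_norm_I_mul_sin_sq θ, rfl⟩

theorem pauli_raising :
    (1 / 2 : ℂ) • ((!![0, 1; 1, 0] : Matrix (Fin 2) (Fin 2) ℂ) + I • !![0, -I; I, 0]) =
      !![0, 1; 0, 0] := by
  ext i j; fin_cases i <;> fin_cases j <;> norm_num

theorem pauli_lowering :
    (1 / 2 : ℂ) • ((!![0, 1; 1, 0] : Matrix (Fin 2) (Fin 2) ℂ) - I • !![0, -I; I, 0]) =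
      !![0, 0; 1, 0] := by
  ext i j; fin_cases i <;> fin_cases j <;> norm_num

noncomputable def lindbladOps (γp γm γz : ℝ) : Fin 3 → Matrix (Fin 2) (Fin 2) ℂ :=
  ![(√γp : ℂ) • !![0, 1; 0, 0], (√γm : ℂ) • !![0, 0; 1, 0], (√γz : ℂ) • !![1, 0; 0, -1]]

noncomputable def generatorPoint {r : ℕ} (V : Fin r → Matrix (Fin 2) (Fin 2) ℂ)
    (U : Matrix (Fin 2) (Fin 2) ℂ) : ℝ × ℝ :=
  (Jf V U 0 1 - Jf V U 1 0, Jf V U 0 1 + Jf V U 1 0)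

theorem Qset_eq_image {r : ℕ} (V : Fin r → Matrix (Fin 2) (Fin 2) ℂ) :
    Qset V = generatorPoint V '' specialUnitaryGroup (Fin 2) ℂ := by
  ext p
  exact ⟨fun ⟨U, hU, hp⟩ => ⟨U, hU, hp.symm⟩, fun ⟨U, hU, hp⟩ => ⟨U, hU, hp.symm⟩⟩

noncomputable def generatorCurve (γp γm γz c : ℝ) : ℝ × ℝ :=
  ((γp - γm) * c, γp + γm + (2 * γz - (γp + γm) / 2) * (1 - c ^ 2))

section

variable {γp γm γz : ℝ}

theorem Jf_lindbladOps (hp : 0 ≤ γp) (hm : 0 ≤ γm) (hz : 0 ≤ γz)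
    (U : Matrix (Fin 2) (Fin 2) ℂ) (i j : Fin 2) :
    Jf (lindbladOps γp γm γz) U i j =
      γp * ‖star (U 0 i) * U 1 j‖ ^ 2 + γm * ‖star (U 1 i) * U 0 j‖ ^ 2 +
        γz * ‖star (U 0 i) * U 0 j - star (U 1 i) * U 1 j‖ ^ 2 := by
  have hJ (k : Fin 3) : (Uᴴ * lindbladOps γp γm γz k * U) i j =
      ![(√γp : ℂ) * (star (U 0 i) * U 1 j), (√γm : ℂ) * (star (U 1 i) * U 0 j),
        (√γz : ℂ) * (star (U 0 i) * U 0 j - star (U 1 i) * U 1 j)] k := by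
    fin_cases k <;> simp [lindbladOps, mul_apply, Fin.sum_univ_two] <;> ring
  simp only [Jf, Fin.sum_univ_three, hJ]
  simp [mul_pow, hp, hm, hz]

theorem Jf_lindbladOps_cayleyKlein (hp : 0 ≤ γp) (hm : 0 ≤ γm) (hz : 0 ≤ γz) (α β : ℂ) :
    Jf (lindbladOps γp γm γz) (cayleyKlein α β) 0 1 =
        γp * ‖α‖ ^ 4 + γm * ‖β‖ ^ 4 + 4 * γz * ‖α‖ ^ 2 * ‖β‖ ^ 2 ∧
      Jf (lindbladOps γp γm γz) (cayleyKlein α β) 1 0 =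
        γp * ‖β‖ ^ 4 + γm * ‖α‖ ^ 4 + 4 * γz * ‖α‖ ^ 2 * ‖β‖ ^ 2 := by
  have hZ (a b : ℂ) : ‖-(a * b) - b * a‖ = 2 * ‖a‖ * ‖b‖ := by
    rw [show -(a * b) - b * a = -2 * (a * b) by ring]
    simp [mul_assoc]
  rw [Jf_lindbladOps hp hm hz, Jf_lindbladOps hp hm hz]
  simp only [cayleyKlein, of_apply, cons_val', cons_val_zero, cons_val_fin_one, cons_val_one,
    star_neg, star_star, mul_neg, neg_mul, norm_mul, norm_neg, norm_star, hZ]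
  constructor <;> ring

theorem generatorPoint_lindbladOps_cayleyKlein (hp : 0 ≤ γp) (hm : 0 ≤ γm) (hz : 0 ≤ γz)
    {α β : ℂ} (h : ‖α‖ ^ 2 + ‖β‖ ^ 2 = 1) :
    generatorPoint (lindbladOps γp γm γz) (cayleyKlein α β) =
      generatorCurve γp γm γz (‖α‖ ^ 2 - ‖β‖ ^ 2) := by
  obtain ⟨h01, h10⟩ := Jf_lindbladOps_cayleyKlein hp hm hz α β
  rw [generatorPoint, h01, h10, generatorCurve, Prod.mk.injEq]
  constructor
  · linear_combination (γp - γm) * (‖α‖ ^ 2 - ‖β‖ ^ 2) * h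
  · linear_combination (‖α‖ ^ 2 + ‖β‖ ^ 2 + 1) * ((γp + γm) / 2 + 2 * γz) * h

theorem generatorPoint_lindbladOps_exp_pauliX (hp : 0 ≤ γp) (hm : 0 ≤ γm) (hz : 0 ≤ γz)
    (θ : ℝ) :
    generatorPoint (lindbladOps γp γm γz) (NormedSpace.exp ((I * θ) • !![0, 1; 1, 0])) =
      generatorCurve γp γm γz (Real.cos (2 * θ)) := by
  rw [exp_I_mul_smul_pauliX, generatorPoint_lindbladOps_cayleyKlein hp hm hz
    (norm_cos_sq_add_norm_I_mul_sin_sq θ), Real.cos_two_mul]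
  congr 1
  simp only [norm_mul, norm_I, one_mul, norm_real, Real.norm_eq_abs, sq_abs]
  linear_combination -Real.sin_sq θ

theorem Qset_lindbladOps (hp : 0 ≤ γp) (hm : 0 ≤ γm) (hz : 0 ≤ γz) :
    Qset (lindbladOps γp γm γz) = generatorCurve γp γm γz '' Set.Icc (-1) 1 := by
  rw [Qset_eq_image]
  apply Set.Subset.antisymm
  · rintro _ ⟨U, hU, rfl⟩
    obtain ⟨α, β, h, rfl⟩ := mem_specialUnitaryGroup_fin_two_iff_norm.1 hU
    refine ⟨‖α‖ ^ 2 - ‖β‖ ^ 2, ⟨?_, ?_⟩,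
      (generatorPoint_lindbladOps_cayleyKlein hp hm hz h).symm⟩ <;>
      nlinarith [sq_nonneg ‖α‖, sq_nonneg ‖β‖]
  · rintro _ ⟨c, ⟨hc₁, hc₂⟩, rfl⟩
    refine ⟨_, exp_I_mul_smul_pauliX_mem_specialUnitaryGroup (Real.arccos c / 2), ?_⟩
    rw [generatorPoint_lindbladOps_exp_pauliX hp hm hz, mul_div_cancel₀ _ two_ne_zero,
      Real.cos_arccos hc₁ hc₂]

theorem generatorCurve_image_Icc (hpm : γm < γp) :
    generatorCurve γp γm γz '' Set.Icc (-1) 1 =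
      {p : ℝ × ℝ | ∃ a ∈ Set.Icc (-(γp - γm)) (γp - γm),
        p = (a, γp + γm + (2 * γz - (γp + γm) / 2) * (1 - a ^ 2 / (γp - γm) ^ 2))} := by
  have hΔ : 0 < γp - γm := sub_pos.2 hpm
  ext p
  constructor
  · rintro ⟨c, ⟨hc₁, hc₂⟩, rfl⟩
    refine ⟨(γp - γm) * c, ⟨by nlinarith, by nlinarith⟩, ?_⟩
    rw [generatorCurve, mul_pow, mul_div_cancel_left₀ _ (pow_ne_zero 2 hΔ.ne')]
  · rintro ⟨a, ⟨ha₁, ha₂⟩, rfl⟩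
    refine ⟨a / (γp - γm), ⟨?_, ?_⟩, ?_⟩
    · rwa [le_div_iff₀ hΔ, neg_one_mul]
    · rwa [div_le_one hΔ]
    · rw [generatorCurve, div_pow, mul_div_cancel₀ _ hΔ.ne']

end

theorem stmt_17 (γp γm γz : ℝ) (hpm : γm < γp) (hm : 0 ≤ γm) (hz : 0 ≤ γz)
    (Δ Sig δ : ℝ) (hΔ : Δ = γp - γm) (hSig : Sig = γp + γm) (hδ : δ = 2 * γz - Sig / 2)
    (V : Fin 3 → Matrix (Fin 2) (Fin 2) ℂ)
    (hV0 : V 0 = (Real.sqrt γp : ℂ) • ((1/2 : ℂ) •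
      ((!![0, 1; 1, 0] : Matrix (Fin 2) (Fin 2) ℂ)
        + Complex.I • (!![0, -Complex.I; Complex.I, 0] : Matrix (Fin 2) (Fin 2) ℂ))))
    (hV1 : V 1 = (Real.sqrt γm : ℂ) • ((1/2 : ℂ) •
      ((!![0, 1; 1, 0] : Matrix (Fin 2) (Fin 2) ℂ)
        - Complex.I • (!![0, -Complex.I; Complex.I, 0] : Matrix (Fin 2) (Fin 2) ℂ))))
    (hV2 : V 2 = (Real.sqrt γz : ℂ) • (!![1, 0; 0, -1] : Matrix (Fin 2) (Fin 2) ℂ)) :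
    Qset V = {p : ℝ × ℝ | ∃ a ∈ Set.Icc (-Δ) Δ,
      p = (a, Sig + δ * (1 - a ^ 2 / Δ ^ 2))} ∧
    (∀ x : ℝ,
      Jf V (NormedSpace.exp ((Complex.I * (Real.pi * x)) •
        (!![0, 1; 1, 0] : Matrix (Fin 2) (Fin 2) ℂ))) 0 1 -
      Jf V (NormedSpace.exp ((Complex.I * (Real.pi * x)) •
        (!![0, 1; 1, 0] : Matrix (Fin 2) (Fin 2) ℂ))) 1 0
        = Δ * Real.cos (2 * Real.pi * x) ∧
      Jf V (NormedSpace.exp ((Complex.I * (Real.pi * x)) •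
        (!![0, 1; 1, 0] : Matrix (Fin 2) (Fin 2) ℂ))) 0 1 +
      Jf V (NormedSpace.exp ((Complex.I * (Real.pi * x)) •
        (!![0, 1; 1, 0] : Matrix (Fin 2) (Fin 2) ℂ))) 1 0
        = Sig + δ * Real.sin (2 * Real.pi * x) ^ 2) := by
  have hp : 0 ≤ γp := hm.trans hpm.le
  rw [pauli_raising] at hV0
  rw [pauli_lowering] at hV1
  obtain rfl : V = lindbladOps γp γm γz := by
    ext1 k
    fin_cases k
    exacts [hV0, hV1, hV2]
  subst hΔ hSig hδ
  refine ⟨by rw [Qset_lindbladOps hp hm hz, generatorCurve_image_Icc hpm], fun x => ?_⟩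
  have h := generatorPoint_lindbladOps_exp_pauliX hp hm hz (Real.pi * x)
  rw [generatorPoint, generatorCurve, Prod.mk.injEq, ← mul_assoc, ← Real.sin_sq] at h
  push_cast at h
  exact h
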